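/- For every H ∈ (0,1) and all real numbers 0 < s < t: ∫_ℝ e^{−2sξ²} (1 − e^{−(t−s)ξ²})² |ξ|^{−1−2H} dξ ≤ Γ(2−H) · (2s)^{H−2} · (t−s)². -/
import Mathlib


open MeasureTheory Real Set

private lemma stmt11_aux (H s : ℝ) (hH0 : 0 < H) (hH1 : H < 1) (hs : 0 < s) :
    ∫ x in Ioi (0 : ℝ), x ^ (3 - 2 * H) * Real.exp (-(2 * s) * x ^ (2 : ℝ)) =
      (2 * s) ^ (H - 2) * (1 / 2) * Real.Gamma (2 - H) := by
  have h2s : (0 : ℝ) < 2 * s := by linarith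
  have hq : (-1 : ℝ) < 3 - 2 * H := by linarith
  have := integral_rpow_mul_exp_neg_mul_rpow (p := 2) (q := 3 - 2 * H) (b := 2 * s)
    two_pos hq h2s
  rw [this]
  have h1 : -(3 - 2 * H + 1) / 2 = H - 2 := by ring
  have h2 : (3 - 2 * H + 1) / 2 = 2 - H := by ring
  rw [h1, h2]

/-- For every `H ∈ (0,1)` and `0 < s < t`:
`∫_ℝ e^{−2sξ²} (1 − e^{−(t−s)ξ²})² |ξ|^{−1−2H} dξ ≤ Γ(2−H) (2s)^{H−2} (t−s)²`. -/
theorem stmt11 (H s t : ℝ) (hH0 : 0 < H) (hH1 : H < 1) (hs : 0 < s) (hst : s < t) :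
    (∫ ξ : ℝ, Real.exp (-2 * s * ξ ^ 2) *
        (1 - Real.exp (-(t - s) * ξ ^ 2)) ^ 2 * |ξ| ^ (-1 - 2 * H)) ≤
      Real.Gamma (2 - H) * (2 * s) ^ (H - 2) * (t - s) ^ 2 := by
  have ha : (0 : ℝ) < t - s := sub_pos.2 hst
  have h2s : (0 : ℝ) < 2 * s := by linarith
  set f : ℝ → ℝ := fun x => x ^ (3 - 2 * H) * Real.exp (-(2 * s) * x ^ (2 : ℝ)) with hf
  set g : ℝ → ℝ := fun ξ => (t - s) ^ 2 * f |ξ| with hg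
  -- Integrability of g
  have hgint : Integrable g := by
    have hmeas : AEStronglyMeasurable g volume := by
      apply Measurable.aestronglyMeasurable
      simp only [hg, hf]
      fun_prop
    have hmaj : Integrable (fun x : ℝ =>
        (t - s) ^ 2 * Real.exp (-(2 * s) * x ^ 2) +
        (t - s) ^ 2 * (x ^ 4 * Real.exp (-(2 * s) * x ^ 2))) := by
      refine Integrable.add ?_ ?_
      · exact (integrable_exp_neg_mul_sq h2s).const_mul _
      · refine Integrable.const_mul ?_ _
        have h4 : (-1 : ℝ) < 4 := by norm_num
        have := integrable_rpow_mul_exp_neg_mul_sq h2s h4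
        refine this.congr (Filter.Eventually.of_forall fun x => ?_)
        show x ^ ((4 : ℕ) : ℝ) * _ = _
        rw [Real.rpow_natCast]
    refine hmaj.mono' hmeas (Filter.Eventually.of_forall fun x => ?_)
    have hx2 : |x| ^ (2 : ℝ) = x ^ 2 := by
      rw [show ((2 : ℝ)) = ((2 : ℕ) : ℝ) by norm_num, Real.rpow_natCast, sq_abs]
    have hgpos : 0 ≤ g x := by
      apply mul_nonneg (by positivity)
      exact mul_nonneg (Real.rpow_nonneg (abs_nonneg x) _) (Real.exp_pos _).le
    rw [Real.norm_of_nonneg hgpos]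
    have hbound : |x| ^ (3 - 2 * H) ≤ 1 + x ^ 4 := by
      rcases le_or_gt |x| 1 with h | h
      · calc |x| ^ (3 - 2 * H) ≤ 1 :=
              Real.rpow_le_one (abs_nonneg x) h (by linarith)
          _ ≤ 1 + x ^ 4 := by nlinarith [sq_nonneg (x ^ 2)]
      · calc |x| ^ (3 - 2 * H) ≤ |x| ^ (4 : ℝ) :=
              Real.rpow_le_rpow_of_exponent_le h.le (by linarith)
          _ = x ^ 4 := by
              rw [show ((4 : ℝ)) = ((4 : ℕ) : ℝ) by norm_num, Real.rpow_natCast, pow_abs,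
                abs_of_nonneg (by positivity)]
          _ ≤ 1 + x ^ 4 := by linarith
    simp only [hg, hf, hx2]
    calc (t - s) ^ 2 * (|x| ^ (3 - 2 * H) * Real.exp (-(2 * s) * x ^ 2))
        ≤ (t - s) ^ 2 * ((1 + x ^ 4) * Real.exp (-(2 * s) * x ^ 2)) := by
          apply mul_le_mul_of_nonneg_left _ (by positivity)
          exact mul_le_mul_of_nonneg_right hbound (Real.exp_pos _).le
      _ = (t - s) ^ 2 * Real.exp (-(2 * s) * x ^ 2) +
          (t - s) ^ 2 * (x ^ 4 * Real.exp (-(2 * s) * x ^ 2)) := by ring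
  -- pointwise bound
  have hle : ∀ ξ : ℝ, Real.exp (-2 * s * ξ ^ 2) *
      (1 - Real.exp (-(t - s) * ξ ^ 2)) ^ 2 * |ξ| ^ (-1 - 2 * H) ≤ g ξ := by
    intro ξ
    rcases eq_or_ne ξ 0 with rfl | hne
    · have hl : Real.exp (-2 * s * (0:ℝ) ^ 2) * (1 - Real.exp (-(t - s) * (0:ℝ) ^ 2)) ^ 2 *
          |(0:ℝ)| ^ (-1 - 2 * H) = 0 := by
        norm_num
      rw [hl]
      apply mul_nonneg (by positivity)
      exact mul_nonneg (Real.rpow_nonneg (abs_nonneg _) _) (Real.exp_pos _).le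
    · have habs : 0 < |ξ| := abs_pos.2 hne
      have hx2 : |ξ| ^ (2 : ℝ) = ξ ^ 2 := by
        rw [show ((2 : ℝ)) = ((2 : ℕ) : ℝ) by norm_num, Real.rpow_natCast, sq_abs]
      have h1 : (1 - Real.exp (-(t - s) * ξ ^ 2)) ^ 2 ≤ ((t - s) * ξ ^ 2) ^ 2 := by
        have hx : 0 ≤ (t - s) * ξ ^ 2 := by positivity
        have hupper : 1 - Real.exp (-(t - s) * ξ ^ 2) ≤ (t - s) * ξ ^ 2 := by
          have := Real.add_one_le_exp (-((t - s) * ξ ^ 2))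
          rw [show -(t - s) * ξ ^ 2 = -((t - s) * ξ ^ 2) by ring]
          linarith
        have hlower : 0 ≤ 1 - Real.exp (-(t - s) * ξ ^ 2) := by
          have : Real.exp (-(t - s) * ξ ^ 2) ≤ 1 := by
            rw [← Real.exp_zero]
            exact Real.exp_le_exp.2 (by nlinarith)
          linarith
        exact pow_le_pow_left₀ hlower hupper 2
      have h2 : ξ ^ 4 * |ξ| ^ (-1 - 2 * H) = |ξ| ^ (3 - 2 * H) := by
        have : ξ ^ 4 = |ξ| ^ (4 : ℝ) := by
          rw [show ((4 : ℝ)) = ((4 : ℕ) : ℝ) by norm_num, Real.rpow_natCast, pow_abs,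
            abs_of_nonneg (by positivity)]
        rw [this, ← Real.rpow_add habs]
        congr 1
        ring
      calc Real.exp (-2 * s * ξ ^ 2) * (1 - Real.exp (-(t - s) * ξ ^ 2)) ^ 2 *
            |ξ| ^ (-1 - 2 * H)
          ≤ Real.exp (-2 * s * ξ ^ 2) * ((t - s) * ξ ^ 2) ^ 2 * |ξ| ^ (-1 - 2 * H) := by
            apply mul_le_mul_of_nonneg_right _ (Real.rpow_nonneg (abs_nonneg _) _)
            exact mul_le_mul_of_nonneg_left h1 (Real.exp_pos _).le
        _ = (t - s) ^ 2 * (ξ ^ 4 * |ξ| ^ (-1 - 2 * H) * Real.exp (-2 * s * ξ ^ 2)) := by ring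
        _ = g ξ := by
            rw [h2]
            simp only [hg, hf, hx2]
            ring_nf
  -- nonnegativity
  have hnn : ∀ ξ : ℝ, 0 ≤ Real.exp (-2 * s * ξ ^ 2) *
      (1 - Real.exp (-(t - s) * ξ ^ 2)) ^ 2 * |ξ| ^ (-1 - 2 * H) := fun ξ =>
    mul_nonneg (mul_nonneg (Real.exp_pos _).le (sq_nonneg _))
      (Real.rpow_nonneg (abs_nonneg _) _)
  have hmain := integral_mono_of_nonneg (Filter.Eventually.of_forall hnn) hgint
    (Filter.Eventually.of_forall hle)
  refine hmain.trans_eq ?_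
  have : ∫ ξ : ℝ, g ξ = (t - s) ^ 2 * ∫ ξ : ℝ, f |ξ| := by
    simp only [hg]
    exact integral_const_mul _ _
  rw [this, integral_comp_abs (f := f), stmt11_aux H s hH0 hH1 hs]
  ring
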